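/- arXiv:2406.07972 — 2 statements merged into one kernel-verified Lean document; each statement's English description precedes it below -/
import Mathlib

section
/- Let y ∈ {1,...,n+1}^d and let i ≠ j be indices in {1,...,d} such that y_i ≤ n and y_j ≤ n. Let y_{+i}, y_{+j}, y_{+ij} be the vectors obtained from y by adding 1 to coordinate i, coordinate j, and both coordinates, respectively. Then C(y_{+i}) - C(y) ≥ C(y_{+ij}) - C(y_{+j}), where C(y) = min_{a ∈ ℝ} ∑_{k=1}^d |y_k - a|. -/
open Finset

/-- `C(y) = min_{a ∈ ℝ} ∑ |yᵢ - a|` (the infimum is attained). -/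
noncomputable def Cmin {d : ℕ} (y : Fin d → ℝ) : ℝ :=
  sInf (Set.range fun a : ℝ => ∑ i, |y i - a|)

lemma cross (x y a b : ℝ) (hxy : y ≤ x) (hab : a ≤ b) :
    |x - b| + |y - a| ≤ |x - a| + |y - b| := by
  rcases abs_cases (x - a) with ⟨e3, h3⟩|⟨e3, h3⟩ <;>
  rcases abs_cases (y - b) with ⟨e4, h4⟩|⟨e4, h4⟩ <;>
  rcases abs_cases (x - b) with ⟨e1, h1⟩|⟨e1, h1⟩ <;>
  rcases abs_cases (y - a) with ⟨e2, h2⟩|⟨e2, h2⟩ <;>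
  linarith

lemma abs_submod (t1 t2 a1 a2 : ℝ) :
    |t1 ⊔ t2 - a1 ⊔ a2| + |t1 ⊓ t2 - a1 ⊓ a2| ≤ |t1 - a1| + |t2 - a2| := by
  rcases le_total t1 t2 with h|h <;> rcases le_total a1 a2 with h'|h'
  · rw [sup_eq_right.2 h, sup_eq_right.2 h', inf_eq_left.2 h, inf_eq_left.2 h']; linarith
  · rw [sup_eq_right.2 h, sup_eq_left.2 h', inf_eq_left.2 h, inf_eq_right.2 h']
    linarith [cross t2 t1 a2 a1 h h']
  · rw [sup_eq_left.2 h, sup_eq_right.2 h', inf_eq_right.2 h, inf_eq_left.2 h']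
    linarith [cross t1 t2 a1 a2 h h']
  · rw [sup_eq_left.2 h, sup_eq_left.2 h', inf_eq_right.2 h, inf_eq_right.2 h']

lemma Cmin_bdd {d : ℕ} (y : Fin d → ℝ) :
    BddBelow (Set.range fun a : ℝ => ∑ i, |y i - a|) := by
  refine ⟨0, ?_⟩
  rintro _ ⟨a, rfl⟩
  positivity

lemma Cmin_le {d : ℕ} (y : Fin d → ℝ) (a : ℝ) : Cmin y ≤ ∑ i, |y i - a| :=
  csInf_le (Cmin_bdd y) ⟨a, rfl⟩

lemma Cmin_exists {d : ℕ} (y : Fin d → ℝ) {ε : ℝ} (hε : 0 < ε) :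
    ∃ a : ℝ, ∑ i, |y i - a| < Cmin y + ε := by
  obtain ⟨v, ⟨a, rfl⟩, hv⟩ :=
    Real.lt_sInf_add_pos (Set.range_nonempty (fun a : ℝ => ∑ i, |y i - a|)) hε
  exact ⟨a, hv⟩

/-- For `y ∈ {1,…,n+1}^d` and distinct coordinates `i ≠ j` with `yᵢ ≤ n`, `yⱼ ≤ n`,
incrementing coordinates gives `C(y₊ᵢ) - C(y) ≥ C(y₊ᵢⱼ) - C(y₊ⱼ)`. -/
theorem stmt8 (n d : ℕ) (hn : 1 ≤ n) (hd : 2 ≤ d) (y : Fin d → ℕ)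
    (hy : ∀ k, 1 ≤ y k ∧ y k ≤ n + 1) (i j : Fin d) (hij : i ≠ j)
    (hyi : y i ≤ n) (hyj : y j ≤ n) :
    Cmin (fun k => ((Function.update y i (y i + 1)) k : ℝ)) - Cmin (fun k => (y k : ℝ))
      ≥ Cmin (fun k =>
            ((Function.update (Function.update y i (y i + 1)) j (y j + 1)) k : ℝ))
        - Cmin (fun k => ((Function.update y j (y j + 1)) k : ℝ)) := by
  set Y : Fin d → ℝ := fun k => ((Function.update y i (y i + 1)) k : ℝ) with hYdef
  set Z : Fin d → ℝ := fun k => ((Function.update y j (y j + 1)) k : ℝ) with hZdef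
  set W : Fin d → ℝ := fun k =>
    ((Function.update (Function.update y i (y i + 1)) j (y j + 1)) k : ℝ) with hWdef
  set yr : Fin d → ℝ := fun k => (y k : ℝ) with hyrdef
  have hW : ∀ k, W k = Y k ⊔ Z k := by
    intro k
    simp only [hWdef, hYdef, hZdef, Function.update_apply]
    split_ifs with h1 h2 h3
    · exact absurd (h2.symm.trans h1) hij
    · subst h1; push_cast; rw [sup_eq_right.2 (by linarith)]
    · subst h3; push_cast; rw [sup_eq_left.2 (by linarith)]
    · simp
  have hI : ∀ k, yr k = Y k ⊓ Z k := by
    intro k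
    simp only [hyrdef, hYdef, hZdef, Function.update_apply]
    split_ifs with h1 h2 h3
    · exact absurd (h1.symm.trans h2) hij
    · subst h1; push_cast; rw [inf_eq_right.2 (by linarith)]
    · subst h3; push_cast; rw [inf_eq_left.2 (by linarith)]
    · simp
  have key : Cmin W + Cmin yr ≤ Cmin Y + Cmin Z := by
    apply le_of_forall_pos_le_add
    intro ε hε
    obtain ⟨a, ha⟩ := Cmin_exists Y (half_pos hε)
    obtain ⟨b, hb⟩ := Cmin_exists Z (half_pos hε)
    have h1 : Cmin W ≤ ∑ k, |W k - a ⊔ b| := Cmin_le W _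
    have h2 : Cmin yr ≤ ∑ k, |yr k - a ⊓ b| := Cmin_le yr _
    have h3 : (∑ k, |W k - a ⊔ b|) + (∑ k, |yr k - a ⊓ b|)
        ≤ (∑ k, |Y k - a|) + (∑ k, |Z k - b|) := by
      rw [← Finset.sum_add_distrib, ← Finset.sum_add_distrib]
      refine Finset.sum_le_sum fun k _ => ?_
      rw [hW k, hI k]
      exact abs_submod (Y k) (Z k) a b
    linarith
  linarith [key]
end

section
/- For any x = (x¹,...,x^d) ∈ (P_n)^d, one has EMD(x) ≥ (1/(d-1)) ∑_{1 ≤ k < ℓ ≤ d} EMD(x^k, x^ℓ), with equality if and only if X^{(2)}_j = X^{(3)}_j = ... = X^{(d-1)}_j for all 1 ≤ j ≤ n. -/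
/-!
Everything happens one column `j` at a time. Let `s_0 ≤ ⋯ ≤ s_{d-1}` be the sorted values
`X^{(·)}_j` and `g_i = s_i - s_{i-1}`. Sorting does not change the sum of pairwise distances,
and writing each `s_ℓ - s_k` as a telescoping sum of gaps gives
`∑_{k<ℓ} |X^k_j - X^ℓ_j| = ∑_i i(d-i) g_i`, because exactly `i(d-i)` pairs straddle the gap
`g_i`. With `m_i = min(i, d-i)` one has `(d-1) m_i - i(d-i) = m_i (m_i - 1) ≥ 0`, which vanishes
only for `i = 1` and `i = d-1`. So `(d-1) EMD(x) - ∑_{k<ℓ} EMD(x^k, x^ℓ)` is a nonnegative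
combination of the gaps, and it is zero exactly when `g_2 = ⋯ = g_{d-2} = 0` in every column.
-/

open Finset

/-- The cumulative sum `X_j = x₁ + ⋯ + x_j` of `x ∈ ℝ^{n+1}`. -/
noncomputable def cdf {n : ℕ} (x : Fin (n + 1) → ℝ) (j : ℕ) : ℝ :=
  ∑ k : Fin (n + 1), if (k : ℕ) < j then x k else 0

/-- The `i`-th smallest component (0-indexed) of the tuple `y`. -/
noncomputable def sortedNth {d : ℕ} (y : Fin d → ℝ) (i : ℕ) : ℝ :=
  if h : i < d then y (Tuple.sort y ⟨i, h⟩) else 0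

theorem sum_filter_lt_comp_perm {ι M : Type*} [LinearOrder ι] [Fintype ι] [AddCommMonoid M]
    (f : ι → ι → M) (hf : ∀ a b, f a b = f b a) (σ : Equiv.Perm ι) :
    ∑ p ∈ univ.filter (fun p : ι × ι => p.1 < p.2), f (σ p.1) (σ p.2)
      = ∑ p ∈ univ.filter (fun p : ι × ι => p.1 < p.2), f p.1 p.2 := by
  refine sum_bij' (fun p _ => (min (σ p.1) (σ p.2), max (σ p.1) (σ p.2)))
    (fun q _ => (min (σ.symm q.1) (σ.symm q.2), max (σ.symm q.1) (σ.symm q.2))) ?_ ?_ ?_ ?_ ?_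
  all_goals
    rintro ⟨a, b⟩ h
    simp only [mem_filter, mem_univ, true_and] at h ⊢
    have := σ.injective.ne h.ne
    have := σ.symm.injective.ne h.ne
    grind

theorem sub_eq_sum_Ico_ite_sub_pred {M : Type*} [AddCommGroup M] (z : ℕ → M) {a b d : ℕ}
    (hab : a ≤ b) (hbd : b < d) :
    z b - z a = ∑ i ∈ Ico 1 d, if a < i ∧ i ≤ b then z i - z (i - 1) else 0 := by
  have hIco : (Ico 1 d).filter (fun i => a < i ∧ i ≤ b) = Ico (a + 1) (b + 1) := by
    ext i; simp only [mem_filter, mem_Ico]; omega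
  have htel := sum_range_sub (fun k => z (a + k)) (b - a)
  rw [Nat.add_sub_cancel' hab, add_zero] at htel
  rw [← sum_filter, hIco, sum_Ico_eq_sum_range, ← htel, Nat.add_sub_add_right]
  refine sum_congr rfl fun k _ => ?_
  rw [show a + 1 + k = a + k + 1 by omega, Nat.add_sub_cancel, add_assoc]

theorem card_filter_lt_and_le {d i : ℕ} (hi : i ≤ d) :
    #{p : Fin d × Fin d | (p.1 : ℕ) < i ∧ i ≤ p.2} = i * (d - i) := by
  have hlt : #{a : Fin d | (a : ℕ) < i} = i := by rw [Fin.card_filter_val_lt, min_eq_right hi]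
  have hle : #{b : Fin d | i ≤ (b : ℕ)} = d - i := by
    have := card_filter_add_card_filter_not (s := univ) (fun b : Fin d => (b : ℕ) < i)
    simp only [hlt, card_univ, Fintype.card_fin, not_lt] at this
    omega
  calc #{p : Fin d × Fin d | (p.1 : ℕ) < i ∧ i ≤ p.2}
      = #((univ.filter fun a : Fin d => (a : ℕ) < i) ×ˢ
          univ.filter fun b : Fin d => i ≤ (b : ℕ)) := by
        congr 1; ext p; simp
    _ = i * (d - i) := by rw [card_product, hlt, hle]

theorem sum_filter_lt_sub_eq {M : Type*} [AddCommGroup M] (d : ℕ) (z : ℕ → M) :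
    ∑ p ∈ univ.filter (fun p : Fin d × Fin d => p.1 < p.2), (z p.2 - z p.1)
      = ∑ i ∈ Ico 1 d, (i * (d - i)) • (z i - z (i - 1)) := by
  rw [sum_congr rfl fun p hp => sub_eq_sum_Ico_ite_sub_pred z (mem_filter.1 hp).2.le p.2.isLt,
    sum_comm]
  refine sum_congr rfl fun i hi => ?_
  rw [← sum_filter, sum_const, filter_filter,
    ← card_filter_lt_and_le (mem_Ico.1 hi).2.le]
  congr 3; ext p; simp only [Fin.lt_def]; omega

theorem add_sub_one_mul_min_sub_mul {R : Type*} [CommRing R] [LinearOrder R] (a b : R) :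
    (a + b - 1) * min a b - a * b = min a b * (min a b - 1) := by
  rcases le_total a b with h | h
  · rw [min_eq_left h]; ring
  · rw [min_eq_right h]; ring

theorem natCast_mul_sub_one_nonneg (m : ℕ) : 0 ≤ (m : ℝ) * (m - 1) := by
  rcases m with _ | m
  · simp
  · push_cast; nlinarith

theorem natCast_mul_sub_one_eq_zero_iff (m : ℕ) : (m : ℝ) * (m - 1) = 0 ↔ m ≤ 1 := by
  rw [mul_eq_zero, sub_eq_zero, Nat.cast_eq_zero, Nat.cast_eq_one]
  omega

theorem forall_Icc_eq_iff_forall_Ioc_eq_pred {α : Type*} (z : ℕ → α) (a b : ℕ) :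
    (∀ i ∈ Icc a b, z i = z a) ↔ ∀ i ∈ Ioc a b, z i = z (i - 1) := by
  refine ⟨fun h i hi => ?_, fun h i hi => ?_⟩
  · rw [mem_Ioc] at hi
    rw [h i (mem_Icc.2 ⟨hi.1.le, hi.2⟩), h (i - 1) (mem_Icc.2 ⟨by omega, by omega⟩)]
  · obtain ⟨hai, hib⟩ := mem_Icc.1 hi
    induction i, hai using Nat.le_induction with
    | base => rfl
    | succ i hai ih =>
      rw [h (i + 1) (mem_Ioc.2 ⟨by omega, hib⟩), Nat.add_sub_cancel]
      exact ih (mem_Icc.2 ⟨hai, by omega⟩) (by omega)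

section SortedTuple

variable {d : ℕ} (y : Fin d → ℝ)

noncomputable def sortedEmd : ℝ :=
  ∑ i ∈ Ico 1 d, (min i (d - i) : ℝ) * (sortedNth y i - sortedNth y (i - 1))

noncomputable def sumAbsSubPairs : ℝ :=
  ∑ p ∈ univ.filter (fun p : Fin d × Fin d => p.1 < p.2), |y p.1 - y p.2|

theorem sortedNth_coe (k : Fin d) : sortedNth y k = y (Tuple.sort y k) :=
  dif_pos k.isLt

theorem sortedNth_sub_pred_nonneg {i : ℕ} (hi : i < d) :
    0 ≤ sortedNth y i - sortedNth y (i - 1) := by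
  rw [sortedNth, sortedNth, dif_pos hi, dif_pos (by omega), sub_nonneg]
  exact Tuple.monotone_sort y (Fin.mk_le_mk.2 (Nat.sub_le i 1))

theorem sumAbsSubPairs_eq :
    sumAbsSubPairs y
      = ∑ i ∈ Ico 1 d, (i * (d - i) : ℝ) * (sortedNth y i - sortedNth y (i - 1)) := by
  rw [sumAbsSubPairs, ← sum_filter_lt_comp_perm (fun a b => |y a - y b|)
    (fun a b => abs_sub_comm _ _) (Tuple.sort y)]
  calc ∑ p ∈ univ.filter (fun p : Fin d × Fin d => p.1 < p.2),
        |y (Tuple.sort y p.1) - y (Tuple.sort y p.2)|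
      = ∑ p ∈ univ.filter (fun p : Fin d × Fin d => p.1 < p.2),
        (sortedNth y p.2 - sortedNth y p.1) := by
        refine sum_congr rfl fun p hp => ?_
        rw [sortedNth_coe, sortedNth_coe, abs_sub_comm]
        exact abs_of_nonneg (sub_nonneg.2 (Tuple.monotone_sort y (mem_filter.1 hp).2.le))
    _ = _ := by
        rw [sum_filter_lt_sub_eq]
        refine sum_congr rfl fun i hi => ?_
        rw [nsmul_eq_mul, Nat.cast_mul, Nat.cast_sub (mem_Ico.1 hi).2.le]

theorem mul_sortedEmd_sub_sumAbsSubPairs :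
    ((d : ℝ) - 1) * sortedEmd y - sumAbsSubPairs y
      = ∑ i ∈ Ico 1 d, ((min i (d - i) : ℕ) : ℝ) * ((min i (d - i) : ℕ) - 1)
          * (sortedNth y i - sortedNth y (i - 1)) := by
  rw [sortedEmd, sumAbsSubPairs_eq, mul_sum, ← sum_sub_distrib]
  refine sum_congr rfl fun i hi => ?_
  have hid : i ≤ d := (mem_Ico.1 hi).2.le
  rw [Nat.cast_min, Nat.cast_sub hid, ← add_sub_one_mul_min_sub_mul (i : ℝ) (d - i)]
  ring

theorem sumAbsSubPairs_le : sumAbsSubPairs y ≤ ((d : ℝ) - 1) * sortedEmd y := by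
  rw [← sub_nonneg, mul_sortedEmd_sub_sumAbsSubPairs]
  exact sum_nonneg fun i hi => mul_nonneg (natCast_mul_sub_one_nonneg _)
    (sortedNth_sub_pred_nonneg y (mem_Ico.1 hi).2)

theorem sumAbsSubPairs_eq_iff :
    sumAbsSubPairs y = ((d : ℝ) - 1) * sortedEmd y ↔
      ∀ i ∈ Icc 1 (d - 2), sortedNth y i = sortedNth y 1 := by
  rw [eq_comm, ← sub_eq_zero, mul_sortedEmd_sub_sumAbsSubPairs,
    sum_eq_zero_iff_of_nonneg fun i hi => mul_nonneg (natCast_mul_sub_one_nonneg _)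
      (sortedNth_sub_pred_nonneg y (mem_Ico.1 hi).2),
    forall_Icc_eq_iff_forall_Ioc_eq_pred]
  refine ⟨fun h i hi => ?_, fun h i hi => ?_⟩
  · obtain ⟨h1, h2⟩ := mem_Ioc.1 hi
    have hc : ((min i (d - i) : ℕ) : ℝ) * ((min i (d - i) : ℕ) - 1) ≠ 0 := fun hc => by
      have := (natCast_mul_sub_one_eq_zero_iff _).1 hc
      omega
    exact sub_eq_zero.1 ((mul_eq_zero.1 (h i (mem_Ico.2 ⟨by omega, by omega⟩))).resolve_left hc)
  · by_cases hmid : i ∈ Ioc 1 (d - 2)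
    · rw [h i hmid, sub_self, mul_zero]
    · simp only [mem_Ico, mem_Ioc] at hi hmid
      rw [(natCast_mul_sub_one_eq_zero_iff _).2 (by omega), zero_mul]

end SortedTuple

theorem stmt15_general (n d : ℕ) (hd : 3 ≤ d) (x : Fin d → Fin (n + 1) → ℝ)
    (E P : ℝ)
    (hE : E = ∑ j ∈ Finset.Icc 1 n, ∑ i ∈ Finset.Ico 1 d, (min i (d - i) : ℝ)
        * (sortedNth (fun i' => cdf (x i') j) i - sortedNth (fun i' => cdf (x i') j) (i - 1)))
    (hP : P = ∑ p ∈ Finset.univ.filter (fun p : Fin d × Fin d => p.1 < p.2),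
        ∑ j ∈ Finset.Icc 1 n, |cdf (x p.1) j - cdf (x p.2) j|) :
    E ≥ (1 / (d - 1 : ℝ)) * P ∧
      (E = (1 / (d - 1 : ℝ)) * P ↔ ∀ j ∈ Finset.Icc 1 n, ∀ i ∈ Finset.Icc 1 (d - 2),
        sortedNth (fun i' => cdf (x i') j) i = sortedNth (fun i' => cdf (x i') j) 1) := by
  set y : ℕ → Fin d → ℝ := fun j i => cdf (x i) j
  have hE' : ((d : ℝ) - 1) * E = ∑ j ∈ Icc 1 n, ((d : ℝ) - 1) * sortedEmd (y j) := by
    rw [hE, mul_sum]; rfl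
  have hP' : P = ∑ j ∈ Icc 1 n, sumAbsSubPairs (y j) := hP.trans sum_comm
  have hd1 : (0 : ℝ) < d - 1 := by
    have : (3 : ℝ) ≤ d := by exact_mod_cast hd
    linarith
  have hle : ∀ j ∈ Icc 1 n, sumAbsSubPairs (y j) ≤ ((d : ℝ) - 1) * sortedEmd (y j) :=
    fun j _ => sumAbsSubPairs_le (y j)
  rw [ge_iff_le, one_div_mul_eq_div, div_le_iff₀ hd1, eq_div_iff hd1.ne', mul_comm E, eq_comm,
    hE', hP', sum_eq_sum_iff_of_le hle]
  exact ⟨sum_le_sum hle, forall₂_congr fun j _ => sumAbsSubPairs_eq_iff (y j)⟩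

/-- `EMD(x) ≥ (1/(d-1)) ∑_{k<ℓ} EMD(x^k, x^ℓ)`, with equality iff
`X^{(2)}_j = ⋯ = X^{(d-1)}_j` for all `1 ≤ j ≤ n` (0-indexed sorted positions
`1, …, d-2`). -/
theorem stmt15 (n d : ℕ) (hn : 1 ≤ n) (hd : 3 ≤ d) (x : Fin d → Fin (n + 1) → ℝ)
    (hx : ∀ i, (∀ m, 0 ≤ x i m) ∧ ∑ m, x i m = 1)
    (E P : ℝ)
    (hE : E = ∑ j ∈ Finset.Icc 1 n, ∑ i ∈ Finset.Ico 1 d, (min i (d - i) : ℝ)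
        * (sortedNth (fun i' => cdf (x i') j) i - sortedNth (fun i' => cdf (x i') j) (i - 1)))
    (hP : P = ∑ p ∈ Finset.univ.filter (fun p : Fin d × Fin d => p.1 < p.2),
        ∑ j ∈ Finset.Icc 1 n, |cdf (x p.1) j - cdf (x p.2) j|) :
    E ≥ (1 / (d - 1 : ℝ)) * P ∧
      (E = (1 / (d - 1 : ℝ)) * P ↔ ∀ j ∈ Finset.Icc 1 n, ∀ i ∈ Finset.Icc 1 (d - 2),
        sortedNth (fun i' => cdf (x i') j) i = sortedNth (fun i' => cdf (x i') j) 1) :=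
  stmt15_general n d hd x E P hE hP
end
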